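/- (Closed formula for the partial trace of the resolvent, GL case.) Let m ≥ 1, N ≥ 1, and let x_b := Σ_{a=1}^{b−1} P_{ab} denote the symmetric-group Jucys–Murphy operators acting on tensor powers of ℂ^N. Let u ∈ ℂ with u ≠ 0 be such that u − x_a is invertible on (ℂ^N)^{⊗a} for a = 1, …, m, and (u − x_a)^2 − 1 is invertible on (ℂ^N)^{⊗(m−1)} for a = 1, …, m−1. Then, as operators on (ℂ^N)^{⊗(m−1)}: tr_m((u − x_m)^{-1}) = ((u + N)/u) · ∏_{a=1}^{m−1} (u − x_a)^2 ((u − x_a)^2 − 1)^{-1} − 1. -/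

import Mathlib

open Finset

noncomputable section

/-- The operator on `(ℂ^N)^{⊗m}` permuting the tensor factors according to `σ`. -/
def Pperm {N m : ℕ} (σ : Equiv.Perm (Fin m)) :
    Matrix (Fin m → Fin N) (Fin m → Fin N) ℂ :=
  Matrix.of fun I J => if I = fun a => J (σ⁻¹ a) then 1 else 0

/-- `P_{ab}`, interchanging tensor factors `a` and `b`. -/
def Pmat {N m : ℕ} (a b : Fin m) : Matrix (Fin m → Fin N) (Fin m → Fin N) ℂ :=
  Pperm (Equiv.swap a b)

/-- The symmetric-group Jucys–Murphy operators `x_b = Σ_{a<b} P_{ab}` on `(ℂ^N)^{⊗m}`. -/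
def xGL (N m : ℕ) (b : Fin m) : Matrix (Fin m → Fin N) (Fin m → Fin N) ℂ :=
  ∑ a ∈ Finset.univ.filter (· < b), Pmat a b

/-- The partial trace over the last tensor factor,
`(tr_m M)_{I,J} = Σ_i M_{(I,i),(J,i)}`. -/
def ptr {N k : ℕ} (M : Matrix (Fin (k + 1) → Fin N) (Fin (k + 1) → Fin N) ℂ) :
    Matrix (Fin k → Fin N) (Fin k → Fin N) ℂ :=
  Matrix.of fun I J => ∑ i : Fin N, M (Fin.snoc I i) (Fin.snoc J i)


/-!
Induction on `m`. Put `A = u - x_m` (on `m` factors, and `A ⊗ 1` on `m + 1`),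
`B = u - x_{m+1}`, `s = P_{m,m+1}` and `T = tr_{m+1} B⁻¹`. From `x_{m+1} = s x_m s + s` one
gets `B s = s A - 1`, and since `A` and `B` commute this inverts to
`B⁻¹ = s A⁻¹ s + A⁻¹ (B⁻¹ s)`. Under `tr_{m+1}`, `s (G ⊗ 1) s` becomes `tr_m G ⊗ 1`, and
`B⁻¹ s A = s + B⁻¹` gives `tr_{m+1}(B⁻¹ s) A = 1 + T`, so `T = tr_m A⁻¹ ⊗ 1 + A⁻¹ (1 + T) A⁻¹`.
As `T` commutes with `A`, this reads `1 + T = (1 + tr_m A⁻¹ ⊗ 1) A² (A² - 1)⁻¹`, which is the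
inductive step of the product formula.
-/

open Matrix
open scoped Kronecker

theorem commute_nonsing_inv_right {n α : Type*} [Fintype n] [DecidableEq n] [CommRing α]
    {A B : Matrix n n α} (hB : IsUnit B) (h : Commute A B) : Commute A B⁻¹ := by
  obtain ⟨B, rfl⟩ := hB
  rw [← coe_units_inv]
  exact h.units_inv_right

section

variable {N : ℕ}

theorem Pperm_eq_permMatrix {m : ℕ} (σ : Equiv.Perm (Fin m)) :
    Pperm (N := N) σ = Equiv.Perm.permMatrix ℂ (σ.arrowCongr (Equiv.refl (Fin N))).symm := by
  ext I J
  simp only [Pperm, of_apply, PEquiv.toMatrix_apply, Equiv.toPEquiv_apply, Option.mem_def,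
    Option.some.injEq, funext_iff]
  congr 1
  exact propext ⟨fun h x => by simpa using h (σ x), fun h x => by simpa using h (σ⁻¹ x)⟩

theorem Pperm_mul_apply {m : ℕ} (σ : Equiv.Perm (Fin m))
    (M : Matrix (Fin m → Fin N) (Fin m → Fin N) ℂ) (I J : Fin m → Fin N) :
    (Pperm σ * M : Matrix (Fin m → Fin N) (Fin m → Fin N) ℂ) I J = M (I ∘ σ) J := by
  rw [Pperm_eq_permMatrix, PEquiv.toMatrix_toPEquiv_mul]; rfl

theorem mul_Pperm_apply {m : ℕ} (σ : Equiv.Perm (Fin m))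
    (M : Matrix (Fin m → Fin N) (Fin m → Fin N) ℂ) (I J : Fin m → Fin N) :
    (M * Pperm σ : Matrix (Fin m → Fin N) (Fin m → Fin N) ℂ) I J =
      M I (J ∘ ⇑σ⁻¹) := by
  rw [Pperm_eq_permMatrix, PEquiv.mul_toMatrix_toPEquiv]; rfl

theorem Pperm_mul {m : ℕ} (σ τ : Equiv.Perm (Fin m)) :
    Pperm (N := N) σ * Pperm τ = Pperm (σ * τ) := by
  rw [Pperm_eq_permMatrix, Pperm_eq_permMatrix, Pperm_eq_permMatrix, ← permMatrix_mul]
  rfl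

theorem Pperm_one {m : ℕ} : Pperm (N := N) (1 : Equiv.Perm (Fin m)) = 1 := by
  rw [Pperm_eq_permMatrix]; exact permMatrix_one

theorem Pmat_self {m : ℕ} (a : Fin m) : Pmat (N := N) a a = 1 := by
  rw [Pmat, Equiv.swap_self]; exact Pperm_one

theorem Pmat_mul_self {m : ℕ} (a b : Fin m) : Pmat (N := N) a b * Pmat a b = 1 := by
  rw [Pmat, Pperm_mul, Equiv.swap_mul_self, Pperm_one]

theorem Pperm_mul_Pmat_mul_Pperm_inv {m : ℕ} (τ : Equiv.Perm (Fin m)) (a b : Fin m) :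
    Pperm τ * Pmat a b * Pperm τ⁻¹ = Pmat (N := N) (τ a) (τ b) := by
  rw [Pmat, Pmat, Pperm_mul, Pperm_mul, Equiv.swap_apply_apply]

theorem sum_snoc {k : ℕ} {α : Type*} [AddCommMonoid α] (f : (Fin (k + 1) → Fin N) → α) :
    ∑ K, f K = ∑ K : Fin k → Fin N, ∑ i, f (Fin.snoc K i) := by
  rw [← (Fin.snocEquiv fun _ => Fin N).sum_comp, Fintype.sum_prod_type, Finset.sum_comm]
  rfl

/-- `M ↦ M ⊗ 1`, the new tensor factor being the last one. -/
def tensorOne (N k : ℕ) :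
    Matrix (Fin k → Fin N) (Fin k → Fin N) ℂ →ₐ[ℂ]
      Matrix (Fin (k + 1) → Fin N) (Fin (k + 1) → Fin N) ℂ :=
  (reindexAlgEquiv ℂ ℂ
      ((Equiv.prodComm _ _).trans (Fin.snocEquiv fun _ => Fin N))).toAlgHom.comp
    { toFun := fun M => M ⊗ₖ (1 : Matrix (Fin N) (Fin N) ℂ)
      map_one' := one_kronecker_one
      map_mul' := fun M M' => by rw [← mul_kronecker_mul, mul_one]
      map_zero' := zero_kronecker _
      map_add' := fun M M' => add_kronecker M M' _
      commutes' := fun c => by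
        simp only [Algebra.algebraMap_eq_smul_one, smul_kronecker, one_kronecker_one] }

theorem tensorOne_apply_snoc {k : ℕ} (M : Matrix (Fin k → Fin N) (Fin k → Fin N) ℂ)
    (I J : Fin k → Fin N) (i j : Fin N) :
    tensorOne N k M (Fin.snoc I i) (Fin.snoc J j) =
      M I J * (1 : Matrix (Fin N) (Fin N) ℂ) i j := by
  simp [tensorOne]

theorem det_tensorOne {k : ℕ} (M : Matrix (Fin k → Fin N) (Fin k → Fin N) ℂ) :
    (tensorOne N k M).det = M.det ^ N := by
  rw [tensorOne, AlgHom.comp_apply, AlgEquiv.coe_toAlgHom, coe_reindexAlgEquiv,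
    det_reindex_self]
  simp [det_kronecker]

theorem isUnit_tensorOne_iff {k : ℕ} (hN : N ≠ 0)
    {X : Matrix (Fin k → Fin N) (Fin k → Fin N) ℂ} :
    IsUnit (tensorOne N k X) ↔ IsUnit X := by
  rw [isUnit_iff_isUnit_det, isUnit_iff_isUnit_det X, det_tensorOne, isUnit_pow_iff hN]

theorem tensorOne_inv {k : ℕ} {X : Matrix (Fin k → Fin N) (Fin k → Fin N) ℂ}
    (hX : IsUnit X) :
    tensorOne N k X⁻¹ = (tensorOne N k X)⁻¹ :=
  (inv_eq_left_inv <| by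
    rw [← map_mul, nonsing_inv_mul _ ((isUnit_iff_isUnit_det X).mp hX), map_one]).symm

theorem snoc_comp_swap_castSucc {k : ℕ} (J : Fin k → Fin N) (j : Fin N) (a b : Fin k) :
    (Fin.snoc J j : Fin (k + 1) → Fin N) ∘ Equiv.swap a.castSucc b.castSucc =
      Fin.snoc (J ∘ Equiv.swap a b) j := by
  funext c
  induction c using Fin.lastCases with
  | last => simp [Equiv.swap_apply_of_ne_of_ne, (Fin.castSucc_lt_last _).ne']
  | cast c => simp [(Fin.castSucc_injective k).swap_apply]

theorem tensorOne_Pmat {k : ℕ} (a b : Fin k) :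
    tensorOne N k (Pmat a b) = Pmat a.castSucc b.castSucc := by
  ext I J
  induction I using Fin.snocCases with | _ I i => ?_
  induction J using Fin.snocCases with | _ J j => ?_
  rw [← mul_one (Pmat a b), ← mul_one (Pmat a.castSucc b.castSucc), tensorOne_apply_snoc]
  by_cases hij : i = j <;>
    simp [Pmat, Pperm_mul_apply, snoc_comp_swap_castSucc, one_apply, Fin.snoc_inj, hij]

theorem ptr_add {k : ℕ} (M M' : Matrix (Fin (k + 1) → Fin N) (Fin (k + 1) → Fin N) ℂ) :
    ptr (M + M') = ptr M + ptr M' := by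
  ext I J; simp [ptr, Finset.sum_add_distrib]

theorem ptr_smul {k : ℕ} (c : ℂ)
    (M : Matrix (Fin (k + 1) → Fin N) (Fin (k + 1) → Fin N) ℂ) :
    ptr (c • M) = c • ptr M := by
  ext I J; simp [ptr, Finset.mul_sum]

theorem ptr_one {k : ℕ} :
    ptr (1 : Matrix (Fin (k + 1) → Fin N) (Fin (k + 1) → Fin N) ℂ) = (N : ℂ) • 1 := by
  ext I J; simp [ptr, one_apply, Fin.snoc_inj]

theorem ptr_mul_tensorOne {k : ℕ} (M : Matrix (Fin (k + 1) → Fin N) (Fin (k + 1) → Fin N) ℂ)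
    (G : Matrix (Fin k → Fin N) (Fin k → Fin N) ℂ) :
    ptr (M * tensorOne N k G) = ptr M * G := by
  ext I J
  simp only [ptr, of_apply, mul_apply, sum_snoc, tensorOne_apply_snoc, one_apply, Finset.sum_mul]
  rw [Finset.sum_comm]
  simp

theorem ptr_tensorOne_mul {k : ℕ} (M : Matrix (Fin (k + 1) → Fin N) (Fin (k + 1) → Fin N) ℂ)
    (G : Matrix (Fin k → Fin N) (Fin k → Fin N) ℂ) :
    ptr (tensorOne N k G * M) = G * ptr M := by
  ext I J
  simp only [ptr, of_apply, mul_apply, sum_snoc, tensorOne_apply_snoc, one_apply, Finset.mul_sum]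
  rw [Finset.sum_comm]
  simp

/-- `P_{m,m+1}` on `m + 1 = k + 2` factors. -/
abbrev swapLast (N k : ℕ) : Matrix (Fin (k + 2) → Fin N) (Fin (k + 2) → Fin N) ℂ :=
  Pmat (Fin.last k).castSucc (Fin.last (k + 1))

theorem snoc_snoc_comp_swap {k : ℕ} (I : Fin k → Fin N) (a b : Fin N) :
    (Fin.snoc (Fin.snoc I a) b : Fin (k + 2) → Fin N) ∘
        Equiv.swap (Fin.last k).castSucc (Fin.last (k + 1)) =
      Fin.snoc (Fin.snoc I b) a := by
  funext c
  induction c using Fin.lastCases with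
  | last => simp
  | cast c =>
    induction c using Fin.lastCases with
    | last => simp
    | cast c =>
      rw [Function.comp_apply, Equiv.swap_apply_of_ne_of_ne (by simp [Fin.ext_iff]; omega)
        (by simp [Fin.ext_iff]; omega)]
      simp

theorem ptr_swapLast {k : ℕ} : ptr (swapLast N k) = 1 := by
  ext I J
  induction I using Fin.snocCases with | _ I a => ?_
  induction J using Fin.snocCases with | _ J b => ?_
  rw [← mul_one (swapLast N k), ptr, of_apply]
  simp only [Pmat, Pperm_mul_apply, snoc_snoc_comp_swap, one_apply, Fin.snoc_inj]
  rw [Finset.sum_eq_single a (fun i _ hi => if_neg fun h => hi h.2.symm) (by simp)]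
  simp

theorem ptr_swapLast_mul_tensorOne_mul_swapLast {k : ℕ}
    (G : Matrix (Fin (k + 1) → Fin N) (Fin (k + 1) → Fin N) ℂ) :
    ptr (swapLast N k * tensorOne N (k + 1) G * swapLast N k) = tensorOne N k (ptr G) := by
  ext I J
  induction I using Fin.snocCases with | _ I a => ?_
  induction J using Fin.snocCases with | _ J b => ?_
  simp only [ptr, of_apply, Pmat, Pperm_mul_apply, mul_Pperm_apply, Equiv.swap_inv,
    snoc_snoc_comp_swap, tensorOne_apply_snoc, Finset.sum_mul]

theorem xGL_last (m : ℕ) :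
    xGL N (m + 1) (Fin.last m) = ∑ a : Fin m, Pmat a.castSucc (Fin.last m) := by
  rw [xGL, Finset.sum_filter, Fin.sum_univ_castSucc]
  simp [Fin.castSucc_lt_last]

theorem xGL_last_eq_sum_sub_one (m : ℕ) :
    xGL N (m + 1) (Fin.last m) = ∑ a, Pmat a (Fin.last m) - 1 := by
  rw [xGL_last, Fin.sum_univ_castSucc, Pmat_self, add_sub_cancel_right]

theorem Pperm_commute_xGL_last {m : ℕ} (σ : Equiv.Perm (Fin (m + 1)))
    (hσ : σ (Fin.last m) = Fin.last m) : Commute (Pperm σ) (xGL N (m + 1) (Fin.last m)) := by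
  rw [xGL_last_eq_sum_sub_one]
  refine Commute.sub_right ?_ (Commute.one_right _)
  have h : ∀ a,
      Pperm σ * Pmat a (Fin.last m) = Pmat (N := N) (σ a) (Fin.last m) * Pperm σ := by
    intro a
    rw [Pmat, Pmat, Pperm_mul, Pperm_mul, Equiv.mul_swap_eq_swap_mul, hσ]
  rw [Commute, SemiconjBy, Finset.mul_sum, Finset.sum_mul,
    ← Equiv.sum_comp σ fun a => Pmat (N := N) a (Fin.last m) * Pperm σ]
  exact Finset.sum_congr rfl fun a _ => h a

theorem tensorOne_xGL {k : ℕ} (b : Fin k) :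
    tensorOne N k (xGL N k b) = xGL N (k + 1) b.castSucc := by
  rw [xGL, xGL, map_sum, Finset.sum_filter, Finset.sum_filter, Fin.sum_univ_castSucc]
  simp [Fin.castSucc_lt_castSucc_iff, tensorOne_Pmat, (Fin.castSucc_lt_last b).not_gt]

theorem xGL_castSucc_last (k : ℕ) :
    xGL N (k + 2) (Fin.last k).castSucc =
      ∑ a : Fin k, Pmat a.castSucc.castSucc (Fin.last k).castSucc := by
  rw [← tensorOne_xGL, xGL_last, map_sum]
  simp only [tensorOne_Pmat]

theorem xGL_last_succ (k : ℕ) :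
    xGL N (k + 2) (Fin.last (k + 1)) =
      swapLast N k * xGL N (k + 2) (Fin.last k).castSucc * swapLast N k + swapLast N k := by
  rw [xGL_last, Fin.sum_univ_castSucc, xGL_castSucc_last, Finset.mul_sum, Finset.sum_mul]
  congr 1
  refine Finset.sum_congr rfl fun a _ => ?_
  have hconj := Pperm_mul_Pmat_mul_Pperm_inv (N := N)
    (Equiv.swap (Fin.last k).castSucc (Fin.last (k + 1))) a.castSucc.castSucc (Fin.last k).castSucc
  rw [Equiv.swap_inv, Equiv.swap_apply_left, Equiv.swap_apply_of_ne_of_ne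
    (Fin.castSucc_injective _ |>.ne (Fin.castSucc_lt_last a).ne)
    (Fin.castSucc_lt_last _).ne] at hconj
  exact hconj.symm

theorem commute_xGL_castSucc_last (k : ℕ) :
    Commute (xGL N (k + 2) (Fin.last k).castSucc) (xGL N (k + 2) (Fin.last (k + 1))) := by
  rw [xGL_castSucc_last]
  exact Commute.sum_left _ _ _ fun a _ => Pperm_commute_xGL_last _ <|
    Equiv.swap_apply_of_ne_of_ne (Fin.castSucc_lt_last _).ne' (Fin.castSucc_lt_last _).ne'

theorem ptr_inv_eq_of_mul_swapLast {k : ℕ}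
    {A : Matrix (Fin (k + 1) → Fin N) (Fin (k + 1) → Fin N) ℂ}
    {B : Matrix (Fin (k + 2) → Fin N) (Fin (k + 2) → Fin N) ℂ} (hA : IsUnit A) (hB : IsUnit B)
    (hBs : B * swapLast N k = swapLast N k * tensorOne N (k + 1) A - 1)
    (hAB : Commute (tensorOne N (k + 1) A) B) :
    ptr B⁻¹ = tensorOne N k (ptr A⁻¹) + A⁻¹ * (1 + ptr B⁻¹) * A⁻¹ := by
  set s := swapLast N k
  set A' := tensorOne N (k + 1) A
  have hA' : IsUnit A' := hA.map (tensorOne N (k + 1))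
  have hA'd := (isUnit_iff_isUnit_det _).mp hA'
  have hBd := (isUnit_iff_isUnit_det _).mp hB
  have hBsA : B⁻¹ * s * A' = s + B⁻¹ := by
    calc B⁻¹ * s * A' = B⁻¹ * (s * A' - 1) + B⁻¹ := by noncomm_ring
      _ = s + B⁻¹ := by rw [← hBs, nonsing_inv_mul_cancel_left _ _ hBd]
  have hptr : ptr (B⁻¹ * s) = (1 + ptr B⁻¹) * A⁻¹ := by
    have h := congrArg ptr hBsA
    rw [ptr_mul_tensorOne, ptr_add, ptr_swapLast] at h
    rw [← h, mul_nonsing_inv_cancel_right _ _ ((isUnit_iff_isUnit_det _).mp hA)]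
  have hBinv : B⁻¹ = s * A'⁻¹ * s + A'⁻¹ * (B⁻¹ * s) := by
    have h : B⁻¹ * s = (s + B⁻¹) * A'⁻¹ := by
      rw [← hBsA, mul_nonsing_inv_cancel_right _ _ hA'd]
    calc B⁻¹ = B⁻¹ * s * s := by rw [mul_assoc, Pmat_mul_self, mul_one]
      _ = s * A'⁻¹ * s + B⁻¹ * A'⁻¹ * s := by rw [h, add_mul, add_mul]
      _ = _ := by
        have hcomm : Commute A'⁻¹ B⁻¹ :=
          (commute_nonsing_inv_right hB (commute_nonsing_inv_right hA' hAB.symm).symm)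
        rw [← hcomm.eq, mul_assoc _ B⁻¹ s]
  conv_lhs => rw [hBinv]
  rw [ptr_add, ← tensorOne_inv hA, ptr_swapLast_mul_tensorOne_mul_swapLast, ptr_tensorOne_mul,
    hptr, mul_assoc]

theorem one_add_ptr_inv_eq_of_mul_swapLast {k : ℕ}
    {A : Matrix (Fin (k + 1) → Fin N) (Fin (k + 1) → Fin N) ℂ}
    {B : Matrix (Fin (k + 2) → Fin N) (Fin (k + 2) → Fin N) ℂ} (hA : IsUnit A) (hB : IsUnit B)
    (hA2 : IsUnit (A ^ 2 - 1))
    (hBs : B * swapLast N k = swapLast N k * tensorOne N (k + 1) A - 1)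
    (hAB : Commute (tensorOne N (k + 1) A) B) :
    1 + ptr B⁻¹ = (1 + tensorOne N k (ptr A⁻¹)) * (A ^ 2 * (A ^ 2 - 1)⁻¹) := by
  have hAd := (isUnit_iff_isUnit_det _).mp hA
  set T := ptr B⁻¹
  set E := tensorOne N k (ptr A⁻¹)
  have hAT : Commute A (1 + T) := by
    have h := congrArg ptr (commute_nonsing_inv_right hB hAB).eq
    rw [ptr_tensorOne_mul, ptr_mul_tensorOne] at h
    exact (Commute.one_right A).add_right h
  have hTA2 : T * A ^ 2 = E * A ^ 2 + (1 + T) := by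
    calc T * A ^ 2 = (E + A⁻¹ * (1 + T) * A⁻¹) * A ^ 2 := by
          rw [← ptr_inv_eq_of_mul_swapLast hA hB hBs hAB]
      _ = E * A ^ 2 + A⁻¹ * ((1 + T) * A) := by
          rw [add_mul, sq A, ← mul_assoc (A⁻¹ * (1 + T) * A⁻¹),
            nonsing_inv_mul_cancel_right _ _ hAd, mul_assoc A⁻¹]
      _ = E * A ^ 2 + (1 + T) := by rw [← hAT.eq, nonsing_inv_mul_cancel_left _ _ hAd]
  have key : (1 + T) * (A ^ 2 - 1) = (1 + E) * A ^ 2 := by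
    calc (1 + T) * (A ^ 2 - 1) = A ^ 2 + T * A ^ 2 - (1 + T) := by noncomm_ring
      _ = (1 + E) * A ^ 2 := by rw [hTA2]; noncomm_ring
  rw [← mul_assoc, ← key, mul_nonsing_inv_cancel_right _ _ ((isUnit_iff_isUnit_det _).mp hA2)]

theorem tensorOne_resolvent {k : ℕ} (u : ℂ) (b : Fin k) :
    tensorOne N k (u • 1 - xGL N k b) = u • 1 - xGL N (k + 1) b.castSucc := by
  rw [map_sub, map_smul, map_one, tensorOne_xGL]

theorem one_add_ptr_resolvent {k : ℕ} {u : ℂ}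
    (hA : IsUnit (u • 1 - xGL N (k + 1) (Fin.last k)))
    (hB : IsUnit (u • 1 - xGL N (k + 2) (Fin.last (k + 1))))
    (hA2 : IsUnit ((u • 1 - xGL N (k + 1) (Fin.last k)) ^ 2 - 1)) :
    1 + ptr (u • 1 - xGL N (k + 2) (Fin.last (k + 1)))⁻¹ =
      (1 + tensorOne N k (ptr (u • 1 - xGL N (k + 1) (Fin.last k))⁻¹)) *
        ((u • 1 - xGL N (k + 1) (Fin.last k)) ^ 2 *
          ((u • 1 - xGL N (k + 1) (Fin.last k)) ^ 2 - 1)⁻¹) := by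
  refine one_add_ptr_inv_eq_of_mul_swapLast hA hB hA2 ?_ ?_ <;> rw [tensorOne_resolvent]
  · rw [xGL_last_succ]
    calc _ = u • swapLast N k - swapLast N k * xGL N (k + 2) (Fin.last k).castSucc *
          (swapLast N k * swapLast N k) - swapLast N k * swapLast N k := by noncomm_ring
      _ = _ := by rw [Pmat_mul_self, mul_one]; noncomm_ring
  · have h := commute_xGL_castSucc_last (N := N) k
    exact (((Commute.one_left _).smul_left u).sub_right ((Commute.one_left _).smul_left u)).sub_left
      (((Commute.one_right _).smul_right u).sub_right h)

theorem prod_resolvent_factor_succ {k : ℕ} {u : ℂ}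
    (hinv : ∀ a : Fin k, IsUnit ((u • 1 - xGL N k a) ^ 2 - 1)) :
    ((List.finRange (k + 1)).map (fun a =>
        (u • 1 - xGL N (k + 1) a) ^ 2 * ((u • 1 - xGL N (k + 1) a) ^ 2 - 1)⁻¹)).prod =
      tensorOne N k ((List.finRange k).map
        (fun a => (u • 1 - xGL N k a) ^ 2 * ((u • 1 - xGL N k a) ^ 2 - 1)⁻¹)).prod *
      ((u • 1 - xGL N (k + 1) (Fin.last k)) ^ 2 *
        ((u • 1 - xGL N (k + 1) (Fin.last k)) ^ 2 - 1)⁻¹) := by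
  rw [List.finRange_succ_last, List.map_append, List.prod_append, List.map_map, map_list_prod,
    List.map_map, List.map_singleton, List.prod_singleton]
  congr 2
  refine List.map_congr_left fun a _ => ?_
  simp only [Function.comp_apply]
  rw [map_mul, tensorOne_inv (hinv a), map_sub, map_one, map_pow, tensorOne_resolvent]

theorem ptr_resolvent_one {u : ℂ} (hu : u ≠ 0) :
    ptr (u • 1 - xGL N 1 (Fin.last 0))⁻¹ = ((u + N) / u) • 1 - 1 := by
  have hinv : (u • 1 : Matrix (Fin 1 → Fin N) (Fin 1 → Fin N) ℂ)⁻¹ = u⁻¹ • 1 :=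
    inv_eq_left_inv <| by rw [smul_mul_smul_comm, inv_mul_cancel₀ hu, one_mul, one_smul]
  have hc : (u + N) / u = u⁻¹ * N + 1 := by field_simp; ring
  rw [xGL_last, Finset.univ_eq_empty, Finset.sum_empty, sub_zero, hinv, ptr_smul, ptr_one,
    smul_smul, hc, add_smul, one_smul, add_sub_cancel_right]

end

/-- Closed formula for the partial trace of the resolvent, GL case: for `m = k + 1`,
`tr_m (u - x_m)⁻¹ = ((u+N)/u) ∏_{a=1}^{m-1} (u - x_a)² ((u - x_a)² - 1)⁻¹ - 1`
as operators on `(ℂ^N)^{⊗(m-1)}`. -/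
theorem partial_trace_resolvent_gl (N k : ℕ) (hN : 1 ≤ N) (u : ℂ) (hu : u ≠ 0)
    (hinv1 : ∀ a : Fin (k + 1),
      IsUnit (u • 1 - xGL N ((a : ℕ) + 1) (Fin.last (a : ℕ))))
    (hinv2 : ∀ a : Fin k, IsUnit ((u • 1 - xGL N k a) ^ 2 - 1)) :
    ptr ((u • 1 - xGL N (k + 1) (Fin.last k))⁻¹) =
      ((u + N) / u) •
        ((List.finRange k).map
          (fun a => (u • 1 - xGL N k a) ^ 2 * ((u • 1 - xGL N k a) ^ 2 - 1)⁻¹)).prod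
      - 1 := by
  induction k with
  | zero => simpa using ptr_resolvent_one hu
  | succ k ih =>
    have hinv2' : ∀ a : Fin k, IsUnit ((u • 1 - xGL N k a) ^ 2 - 1) := fun a => by
      rw [← isUnit_tensorOne_iff (by omega), map_sub, map_pow, map_one, tensorOne_resolvent]
      exact hinv2 a.castSucc
    rw [prod_resolvent_factor_succ hinv2', eq_sub_iff_add_eq',
      one_add_ptr_resolvent (k := k) (hinv1 (Fin.last k).castSucc) (hinv1 (Fin.last (k + 1)))
        (hinv2 (Fin.last k)),
      ih (fun a => hinv1 a.castSucc) hinv2', map_sub, map_smul, map_one, add_sub_cancel,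
      smul_mul_assoc]

end
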